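/- arXiv:1707.00430 — 2 statements merged into one kernel-verified Lean document; each statement's English description precedes it below -/
import Mathlib

section
/- Let j ≥ 1 be an integer, let a_0, …, a_{j−1} be nonnegative real numbers, and let x ≥ 0 satisfy x^j ≤ Σ_{l=0}^{j−1} a_l x^l. Then x ≤ j · Σ_{l=0}^{j−1} a_l^{1/(j−l)}. -/
/-! If `x > j ∑ₗ aₗ^{1/(j-l)}`, then every `aₗ^{1/(j-l)}` is below `x / j`, so `aₗ < (x/j)^{j-l}`
and `∑ₗ aₗ xˡ < ∑ₗ (x/j)^{j-l} xˡ`. Each of the `j` terms on the right is `x^j / j^{j-l} ≤ x^j / j`,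
so the right-hand side is at most `x^j`, contradicting `x^j ≤ ∑ₗ aₗ xˡ`. -/

open Finset

lemma lt_pow_of_rpow_one_div_lt {a y : ℝ} {n : ℕ} (ha : 0 ≤ a) (hy : 0 ≤ y) (hn : n ≠ 0)
    (h : a ^ ((1 : ℝ) / n) < y) : a < y ^ n := by
  rw [one_div, Real.rpow_inv_lt_iff_of_pos ha hy (by positivity), Real.rpow_natCast] at h
  exact h

lemma sum_div_pow_sub_mul_pow_le {x : ℝ} (hx : 0 ≤ x) (j : ℕ) :
    ∑ l ∈ range j, (x / j) ^ (j - l) * x ^ l ≤ x ^ j := by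
  rcases Nat.eq_zero_or_pos j with rfl | hj
  · simp
  have hj' : (1 : ℝ) ≤ j := by exact_mod_cast hj
  have hterm : ∀ l ∈ range j, (x / j) ^ (j - l) * x ^ l ≤ x ^ j / j := by
    intro l hl
    have hlj : l < j := mem_range.mp hl
    rw [div_pow, div_mul_eq_mul_div, ← pow_add, Nat.sub_add_cancel hlj.le]
    gcongr
    exact le_self_pow₀ hj' (by omega)
  calc ∑ l ∈ range j, (x / j) ^ (j - l) * x ^ l
      ≤ ∑ _l ∈ range j, x ^ j / j := sum_le_sum hterm
    _ = x ^ j := by rw [sum_const, card_range, nsmul_eq_mul]; field_simp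

lemma sum_mul_pow_lt_pow {x : ℝ} (hx : 0 < x) {j : ℕ} {c : ℕ → ℝ}
    (hc : ∀ l < j, c l < (x / j) ^ (j - l)) :
    ∑ l ∈ range j, c l * x ^ l < x ^ j := by
  rcases Nat.eq_zero_or_pos j with rfl | hj
  · simp
  calc ∑ l ∈ range j, c l * x ^ l
      < ∑ l ∈ range j, (x / j) ^ (j - l) * x ^ l :=
        sum_lt_sum_of_nonempty ⟨0, mem_range.mpr hj⟩ fun l hl =>
          mul_lt_mul_of_pos_right (hc l (mem_range.mp hl)) (pow_pos hx l)
    _ ≤ x ^ j := sum_div_pow_sub_mul_pow_le hx.le j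

theorem stmt_0_general (j : ℕ) (a : ℕ → ℝ) (ha : ∀ l, l < j → 0 ≤ a l)
    (x : ℝ)
    (h : x ^ j ≤ ∑ l ∈ Finset.range j, a l * x ^ l) :
    x ≤ (j : ℝ) * ∑ l ∈ Finset.range j, (a l) ^ ((1 : ℝ) / ((j : ℝ) - (l : ℝ))) := by
  set b : ℕ → ℝ := fun l => a l ^ ((1 : ℝ) / ((j : ℝ) - (l : ℝ)))
  have hb : ∀ l ∈ range j, 0 ≤ b l := fun l hl => Real.rpow_nonneg (ha l (mem_range.mp hl)) _
  by_contra! hlt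
  have hx : 0 < x := (mul_nonneg (Nat.cast_nonneg j) (sum_nonneg hb)).trans_lt hlt
  refine (sum_mul_pow_lt_pow hx fun l hl => ?_).not_ge h
  have hj : (0 : ℝ) < j := Nat.cast_pos.mpr (by omega)
  have hbl : b l < x / j := by
    rw [lt_div_iff₀' hj]
    exact (mul_le_mul_of_nonneg_left (single_le_sum hb (mem_range.mpr hl)) hj.le).trans_lt hlt
  refine lt_pow_of_rpow_one_div_lt (ha l hl) (by positivity) (by omega) ?_
  rwa [Nat.cast_sub hl.le]

/-- If `j ≥ 1`, the `a l` are nonnegative reals, `x ≥ 0`, and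
`x^j ≤ ∑_{l<j} a_l x^l`, then `x ≤ j * ∑_{l<j} a_l^{1/(j-l)}`. -/
theorem stmt_0 (j : ℕ) (hj : 1 ≤ j) (a : ℕ → ℝ) (ha : ∀ l, l < j → 0 ≤ a l)
    (x : ℝ) (hx : 0 ≤ x)
    (h : x ^ j ≤ ∑ l ∈ Finset.range j, a l * x ^ l) :
    x ≤ (j : ℝ) * ∑ l ∈ Finset.range j, (a l) ^ ((1 : ℝ) / ((j : ℝ) - (l : ℝ))) :=
  stmt_0_general j a ha x h
end

section
/- Let k ∈ ℂ⁺ and let f : ℝ³ → ℂ be continuous with compact support. For r > 0 and σ ∈ S², define B_r^{(2)}(f)(σ) := r ∫_{ℝ³} [e^{ik(−r+|rσ−y|+|y|)} / (4π |rσ−y| |y|)] f(y) dy and B_∞^{(2)}(f)(σ) := (4π)^{−1} ∫_{ℝ³} [e^{ik|y|(1−⟨σ,ŷ⟩)} / |y|] f(y) dy, where ŷ := y/|y|. Then B_r^{(2)}(f) converges to B_∞^{(2)}(f) uniformly on S² as r → ∞. -/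
open MeasureTheory Metric Filter
open scoped RealInnerProductSpace

noncomputable section

/-- `B_r^{(2)}(f)(σ) = r ∫ e^{ik(−r+|rσ−y|+|y|)}/(4π|rσ−y||y|) · f(y) dy`. -/
def Br2 (k : ℂ) (f : EuclideanSpace ℝ (Fin 3) → ℂ)
    (r : ℝ) (σ : EuclideanSpace ℝ (Fin 3)) : ℂ :=
  (r : ℂ) * ∫ y : EuclideanSpace ℝ (Fin 3),
    Complex.exp (Complex.I * k * ((-r + ‖r • σ - y‖ + ‖y‖ : ℝ) : ℂ)) /
      ((4 * Real.pi * ‖r • σ - y‖ * ‖y‖ : ℝ) : ℂ) * f y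

/-- `B_∞^{(2)}(f)(σ) = (4π)⁻¹ ∫ e^{ik|y|(1−⟨σ,ŷ⟩)}/|y| · f(y) dy`. -/
def Binf2 (k : ℂ) (f : EuclideanSpace ℝ (Fin 3) → ℂ)
    (σ : EuclideanSpace ℝ (Fin 3)) : ℂ :=
  ((4 * Real.pi : ℝ) : ℂ)⁻¹ * ∫ y : EuclideanSpace ℝ (Fin 3),
    Complex.exp (Complex.I * k * ((‖y‖ * (1 - ⟪σ, ‖y‖⁻¹ • y⟫) : ℝ) : ℂ)) / ((‖y‖ : ℝ) : ℂ) * f y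

end


/-!
Both sides are integrals of kernels against `f`. For `σ ∈ S²` write `w = ‖rσ - y‖`; the phase of
`B_r` exceeds that of `B_∞` by `δ = w - (r - ⟪σ, y⟫) ∈ [0, ‖y‖² / r]`, and `r / w = 1 + O(‖y‖ / r)`.
As `Im k ≥ 0`, the exponentials have modulus at most one and `|e^{ikδ} - 1| ≤ |k| δ`, so for
`‖y‖ ≤ R ≤ r / 2` the kernels differ by at most `(1 + |k| R) / (2π r)`, uniformly in `σ`.
The kernel of `B_∞` is `O(1 / ‖y‖)`, hence locally integrable on `ℝ³`.
-/

open Complex Topology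

theorem tendstoUniformlyOn_of_dist_le {ι α β : Type*} [PseudoMetricSpace β]
    {F : ι → α → β} {G : α → β} {l : Filter ι} {s : Set α} {b : ι → ℝ}
    (hb : Tendsto b l (𝓝 0)) (h : ∀ᶠ i in l, ∀ x ∈ s, dist (G x) (F i x) ≤ b i) :
    TendstoUniformlyOn F G l s :=
  Metric.tendstoUniformlyOn_iff.2 fun _ hε =>
    (h.and (hb.eventually (gt_mem_nhds hε))).mono fun _ hi x hx => (hi.1 x hx).trans_lt hi.2

namespace Complex

theorem norm_exp_sub_one_le_of_re_nonpos {z : ℂ} (hz : z.re ≤ 0) : ‖exp z - 1‖ ≤ ‖z‖ := by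
  have h := (convex_halfSpace_re_le (0 : ℝ)).norm_image_sub_le_of_norm_hasDerivWithin_le
    (f := exp) (C := 1) (fun w _ => (hasDerivAt_exp w).hasDerivWithinAt)
    (fun w hw => by simpa [norm_exp] using hw) (x := 0) (y := z) (by simp) hz
  simpa using h

theorem norm_exp_I_mul_ofReal_le_one_of_im_nonneg {k : ℂ} (hk : 0 ≤ k.im) {u : ℝ} (hu : 0 ≤ u) :
    ‖exp (I * k * u)‖ ≤ 1 := by
  rw [norm_exp, Real.exp_le_one_iff]
  simp only [mul_re, I_re, I_im, ofReal_re, ofReal_im, mul_im]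
  nlinarith

theorem norm_exp_I_mul_ofReal_sub_one_le_of_im_nonneg {k : ℂ} (hk : 0 ≤ k.im) {u : ℝ}
    (hu : 0 ≤ u) : ‖exp (I * k * u) - 1‖ ≤ ‖k‖ * u := by
  refine (norm_exp_sub_one_le_of_re_nonpos ?_).trans_eq ?_
  · simp only [mul_re, I_re, I_im, ofReal_re, ofReal_im, mul_im]
    nlinarith
  · simp [abs_of_nonneg hu]

end Complex

section Geometry

variable {E : Type*} [NormedAddCommGroup E] [InnerProductSpace ℝ E] {σ y : E} {r : ℝ}

theorem inner_le_norm_of_norm_eq_one (hσ : ‖σ‖ = 1) (y : E) : ⟪σ, y⟫ ≤ ‖y‖ :=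
  (real_inner_le_norm σ y).trans_eq (by rw [hσ, one_mul])

theorem norm_smul_sub_sq (hσ : ‖σ‖ = 1) (r : ℝ) (y : E) :
    ‖r • σ - y‖ ^ 2 = r ^ 2 - 2 * r * ⟪σ, y⟫ + ‖y‖ ^ 2 := by
  rw [norm_sub_sq_real, norm_smul, hσ, real_inner_smul_left, Real.norm_eq_abs, mul_one, sq_abs]
  ring

theorem sub_inner_le_norm_smul_sub (hσ : ‖σ‖ = 1) (r : ℝ) (y : E) :
    r - ⟪σ, y⟫ ≤ ‖r • σ - y‖ := by
  have h := real_inner_le_norm σ (r • σ - y)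
  rwa [inner_sub_right, real_inner_smul_right, real_inner_self_eq_norm_sq, hσ, one_pow, mul_one,
    one_mul] at h

theorem abs_norm_smul_sub_sub_le (hσ : ‖σ‖ = 1) (hr : 0 ≤ r) (y : E) :
    |‖r • σ - y‖ - r| ≤ ‖y‖ := by
  simpa [norm_smul, hσ, abs_of_nonneg hr] using abs_norm_sub_norm_le (r • σ - y) (r • σ)

theorem norm_smul_sub_le_sub_inner_add (hσ : ‖σ‖ = 1) (hr : 0 < r) :
    ‖r • σ - y‖ ≤ r - ⟪σ, y⟫ + ‖y‖ ^ 2 / r := by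
  have hsq := norm_smul_sub_sq hσ r y
  have hlow := sub_inner_le_norm_smul_sub hσ r y
  have hdist := abs_le.1 (abs_norm_smul_sub_sub_le hσ hr.le y)
  have hs := inner_le_norm_of_norm_eq_one hσ y
  rw [← sub_le_iff_le_add', le_div_iff₀ hr]
  nlinarith

theorem norm_mul_one_sub_inner_inv_smul (σ y : E) :
    ‖y‖ * (1 - ⟪σ, ‖y‖⁻¹ • y⟫) = ‖y‖ - ⟪σ, y⟫ := by
  rcases eq_or_ne y 0 with rfl | hy
  · simp
  · rw [real_inner_smul_right]
    field_simp

end Geometry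

noncomputable section Kernels

variable {E : Type*} [NormedAddCommGroup E] [InnerProductSpace ℝ E]

def br2Kernel (k : ℂ) (r : ℝ) (σ y : E) : ℂ :=
  r * (exp (I * k * ((-r + ‖r • σ - y‖ + ‖y‖ : ℝ) : ℂ)) /
    ((4 * Real.pi * ‖r • σ - y‖ * ‖y‖ : ℝ) : ℂ))

/-- The phase `‖y‖ (1 - ⟪σ, ‖y‖⁻¹ • y⟫)` of `Binf2`, written as `‖y‖ - ⟪σ, y⟫`. -/
def binf2Kernel (k : ℂ) (σ y : E) : ℂ :=
  ((4 * Real.pi : ℝ) : ℂ)⁻¹ * (exp (I * k * ((‖y‖ - ⟪σ, y⟫ : ℝ) : ℂ)) / ((‖y‖ : ℝ) : ℂ))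

theorem norm_binf2Kernel_le {k : ℂ} (hk : 0 ≤ k.im) {σ : E} (hσ : ‖σ‖ = 1) (y : E) :
    ‖binf2Kernel k σ y‖ ≤ (4 * Real.pi)⁻¹ * ‖y‖ ^ (-1 : ℝ) := by
  have hexp := norm_exp_I_mul_ofReal_le_one_of_im_nonneg hk
    (sub_nonneg.2 (inner_le_norm_of_norm_eq_one hσ y))
  rw [binf2Kernel, norm_mul, norm_inv, norm_div, norm_real, norm_real, Real.norm_eq_abs,
    Real.norm_eq_abs, abs_of_pos (by positivity : (0 : ℝ) < 4 * Real.pi), abs_norm,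
    Real.rpow_neg_one, div_eq_mul_inv]
  gcongr
  exact mul_le_of_le_one_left (by positivity) hexp

theorem binf2Kernel_sub_br2Kernel (k : ℂ) {σ y : E} (r : ℝ) (hy : y ≠ 0) (hw : r • σ - y ≠ 0) :
    binf2Kernel k σ y - br2Kernel k r σ y =
      exp (I * k * ((‖y‖ - ⟪σ, y⟫ : ℝ) : ℂ)) / ((4 * Real.pi * ‖y‖ : ℝ) : ℂ) *
        (((‖r • σ - y‖ - r) / ‖r • σ - y‖ : ℝ) - ((r / ‖r • σ - y‖ : ℝ) : ℂ) *
          (exp (I * k * ((‖r • σ - y‖ - (r - ⟪σ, y⟫) : ℝ) : ℂ)) - 1)) := by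
  have hexp : exp (I * k * ((-r + ‖r • σ - y‖ + ‖y‖ : ℝ) : ℂ)) =
      exp (I * k * ((‖y‖ - ⟪σ, y⟫ : ℝ) : ℂ)) *
        exp (I * k * ((‖r • σ - y‖ - (r - ⟪σ, y⟫) : ℝ) : ℂ)) := by
    rw [← exp_add, ← mul_add, ← ofReal_add]
    ring_nf
  have : (‖y‖ : ℂ) ≠ 0 := ofReal_ne_zero.2 (norm_ne_zero_iff.2 hy)
  have : (‖r • σ - y‖ : ℂ) ≠ 0 := ofReal_ne_zero.2 (norm_ne_zero_iff.2 hw)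
  have : (Real.pi : ℂ) ≠ 0 := ofReal_ne_zero.2 Real.pi_ne_zero
  rw [binf2Kernel, br2Kernel, hexp]
  push_cast
  field_simp
  ring

/-- The `1 / ‖y‖` singularities of the two kernels cancel: their difference is bounded. -/
theorem norm_binf2Kernel_sub_br2Kernel_le {k : ℂ} (hk : 0 ≤ k.im) {σ y : E} (hσ : ‖σ‖ = 1)
    {r : ℝ} (hr : 2 * ‖y‖ ≤ r) :
    ‖binf2Kernel k σ y - br2Kernel k r σ y‖ ≤ (1 + ‖k‖ * ‖y‖) / (2 * Real.pi * r) := by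
  rcases eq_or_ne y 0 with rfl | hy
  · simp only [binf2Kernel, br2Kernel, norm_zero, ofReal_zero, div_zero, mul_zero, sub_zero]
    have : 0 ≤ r := by simpa using hr
    positivity
  set n := ‖y‖
  set w := ‖r • σ - y‖
  set s := ⟪σ, y⟫
  have hn : 0 < n := norm_pos_iff.2 hy
  have hr0 : 0 < r := by linarith
  have hwr : |w - r| ≤ n := abs_norm_smul_sub_sub_le hσ hr0.le y
  have hrw : r ≤ 2 * w := by linarith [abs_le.1 hwr]
  have hw : 0 < w := by linarith
  have hδ0 : 0 ≤ w - (r - s) := sub_nonneg.2 (sub_inner_le_norm_smul_sub hσ r y)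
  have hδ : w - (r - s) ≤ n ^ 2 / r :=
    sub_le_iff_le_add'.2 (norm_smul_sub_le_sub_inner_add hσ hr0)
  set A := exp (I * k * ((n - s : ℝ) : ℂ))
  set B := exp (I * k * ((w - (r - s) : ℝ) : ℂ))
  have hA : ‖A‖ ≤ 1 := norm_exp_I_mul_ofReal_le_one_of_im_nonneg hk
    (sub_nonneg.2 (inner_le_norm_of_norm_eq_one hσ y))
  have hB : ‖B - 1‖ ≤ ‖k‖ * (n ^ 2 / r) :=
    (norm_exp_I_mul_ofReal_sub_one_le_of_im_nonneg hk hδ0).trans (by gcongr)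
  have hrw' : r / w ≤ 2 := (div_le_iff₀ hw).2 hrw
  have hwr' : |w - r| / w ≤ 2 * n / r := by
    rw [div_le_div_iff₀ hw hr0]
    nlinarith
  calc ‖binf2Kernel k σ y - br2Kernel k r σ y‖
      = ‖A‖ / (4 * Real.pi * n) * ‖(((w - r) / w : ℝ) : ℂ) - ((r / w : ℝ) : ℂ) * (B - 1)‖ := by
        rw [binf2Kernel_sub_br2Kernel k r hy (norm_pos_iff.1 hw), norm_mul, norm_div, norm_real,
          Real.norm_of_nonneg (by positivity)]
    _ ≤ 1 / (4 * Real.pi * n) * (|w - r| / w + r / w * (‖k‖ * (n ^ 2 / r))) := by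
        gcongr
        refine (norm_sub_le _ _).trans ?_
        rw [norm_mul, norm_real, norm_real, Real.norm_eq_abs, Real.norm_of_nonneg (by positivity),
          abs_div, abs_of_pos hw]
        gcongr
    _ ≤ 1 / (4 * Real.pi * n) * (2 * n / r + 2 * (‖k‖ * (n ^ 2 / r))) := by gcongr
    _ = (1 + ‖k‖ * n) / (2 * Real.pi * r) := by
        field_simp
        ring

variable [MeasurableSpace E] [BorelSpace E]

@[fun_prop]
theorem measurable_br2Kernel (k : ℂ) (r : ℝ) (σ : E) : Measurable (br2Kernel k r σ) := by
  unfold br2Kernel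
  fun_prop

@[fun_prop]
theorem measurable_binf2Kernel (k : ℂ) (σ : E) : Measurable (binf2Kernel k σ) := by
  unfold binf2Kernel
  fun_prop

theorem locallyIntegrable_binf2Kernel [FiniteDimensional ℝ E] (hE : 1 < Module.finrank ℝ E)
    {μ : Measure E} [μ.IsAddHaarMeasure] {k : ℂ} (hk : 0 ≤ k.im) {σ : E} (hσ : ‖σ‖ = 1) :
    LocallyIntegrable (binf2Kernel k σ) μ :=
  locallyIntegrable_of_norm_le_rpow hE.le (by exact_mod_cast hE)
    (ae_of_all _ (norm_binf2Kernel_le hk hσ)) (measurable_binf2Kernel k σ).aestronglyMeasurable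

end Kernels

local notation "E3" => EuclideanSpace ℝ (Fin 3)

theorem br2_eq_integral (k : ℂ) (f : E3 → ℂ) (r : ℝ) (σ : E3) :
    Br2 k f r σ = ∫ y, br2Kernel k r σ y * f y := by
  rw [Br2, ← integral_const_mul]
  simp only [br2Kernel, mul_assoc]

theorem binf2_eq_integral (k : ℂ) (f : E3 → ℂ) (σ : E3) :
    Binf2 k f σ = ∫ y, binf2Kernel k σ y * f y := by
  rw [Binf2, ← integral_const_mul]
  simp only [binf2Kernel, norm_mul_one_sub_inner_inv_smul, mul_assoc]

theorem norm_binf2_sub_br2_le {k : ℂ} (hk : 0 ≤ k.im) {f : E3 → ℂ} (hf : Continuous f)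
    (hsupp : HasCompactSupport f) {R : ℝ} (hR : tsupport f ⊆ closedBall 0 R) {r : ℝ}
    (hr : 2 * R ≤ r) {σ : E3} (hσ : ‖σ‖ = 1) :
    ‖Binf2 k f σ - Br2 k f r σ‖ ≤ (1 + ‖k‖ * R) / (2 * Real.pi * r) * ∫ y, ‖f y‖ := by
  have hpt : ∀ y, ‖binf2Kernel k σ y * f y - br2Kernel k r σ y * f y‖ ≤
      (1 + ‖k‖ * R) / (2 * Real.pi * r) * ‖f y‖ := by
    intro y
    by_cases hy : y ∈ tsupport f
    · have hyR : ‖y‖ ≤ R := mem_closedBall_zero_iff.1 (hR hy)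
      rw [← sub_mul, norm_mul]
      gcongr
      refine (norm_binf2Kernel_sub_br2Kernel_le hk hσ (by linarith)).trans ?_
      have : 0 ≤ r := by linarith [norm_nonneg y]
      gcongr
    · simp [image_eq_zero_of_notMem_tsupport hy]
  have hbound : Integrable fun y => (1 + ‖k‖ * R) / (2 * Real.pi * r) * ‖f y‖ :=
    (hf.norm.integrable_of_hasCompactSupport hsupp.norm).const_mul _
  have hinf : Integrable fun y => binf2Kernel k σ y * f y :=
    (locallyIntegrable_binf2Kernel (by simp) hk hσ).integrable_smul_right_of_hasCompactSupport
      hf hsupp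
  have hdiff : Integrable fun y => binf2Kernel k σ y * f y - br2Kernel k r σ y * f y :=
    hbound.mono' (by fun_prop) (ae_of_all _ hpt)
  have hbr : Integrable fun y => br2Kernel k r σ y * f y :=
    (hinf.sub hdiff).congr (ae_of_all _ fun y => sub_sub_cancel _ _)
  rw [binf2_eq_integral, br2_eq_integral, ← integral_sub hinf hbr, ← integral_const_mul]
  exact norm_integral_le_of_norm_le hbound (ae_of_all _ hpt)

/-- For `k ∈ ℂ⁺` and continuous compactly supported `f : ℝ³ → ℂ`,
`B_r^{(2)}(f)` converges to `B_∞^{(2)}(f)` uniformly on the unit sphere `S²` as `r → ∞`. -/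
theorem stmt_9 (k : ℂ) (hk : 0 < k.im)
    (f : EuclideanSpace ℝ (Fin 3) → ℂ) (hf : Continuous f) (hsupp : HasCompactSupport f) :
    TendstoUniformlyOn (fun (r : ℝ) (σ : EuclideanSpace ℝ (Fin 3)) => Br2 k f r σ)
      (Binf2 k f) atTop (sphere (0 : EuclideanSpace ℝ (Fin 3)) 1) := by
  obtain ⟨R, hR⟩ := (isBounded_iff_subset_closedBall (0 : E3)).1 hsupp.isBounded
  have hb : Tendsto (fun r => (1 + ‖k‖ * R) / (2 * Real.pi * r) * ∫ y, ‖f y‖) atTop (𝓝 0) := by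
    simpa using (tendsto_const_nhds.div_atTop
      (tendsto_id.const_mul_atTop Real.two_pi_pos)).mul_const (∫ y, ‖f y‖)
  refine tendstoUniformlyOn_of_dist_le hb ((eventually_ge_atTop (2 * R)).mono fun r hr σ hσ => ?_)
  rw [dist_eq_norm]
  exact norm_binf2_sub_br2_le hk.le hf hsupp hR hr (by simpa using hσ)
end
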